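/- Let D be a positive integer. Define a_i = 3i(i+1)/(D(D+2)), b_i = 3(D−i)(i+1)(D+i+2)/(D(D+2)(2i+1)), c_i = 3(D−i+1)i(D+i+1)/(D(D+2)(2i+1)), θ_i = 3 − 2a_i. Let A be the tridiagonal matrix with diagonal entries a_0,…,a_D, superdiagonal b_0,…,b_{D−1}, subdiagonal c_1,…,c_D, and let A* = diag(θ_0,…,θ_D). Let P be defined by P_{i,j} = (2j+1)·₄F₃[−i, i+1, −j, j+1; 1, D+2, −D; 1]. Then P A = A* P. -/

import Mathlib

/-- Pochhammer symbol `(a)_n = a(a+1)⋯(a+n-1)`. -/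
noncomputable def poch (a : ℝ) (n : ℕ) : ℝ := ∏ k ∈ Finset.range n, (a + k)

/-- The terminating hypergeometric sum
`₄F₃[−i, i+1, −j, j+1; 1, D+2, −D; 1] = Σ_{n=0}^{min(i,j)} …`. -/
noncomputable def F4 (D i j : ℕ) : ℝ :=
  ∑ n ∈ Finset.range (min i j + 1),
    (poch (-(i : ℝ)) n * poch ((i : ℝ) + 1) n * poch (-(j : ℝ)) n * poch ((j : ℝ) + 1) n) /
      (poch 1 n * poch ((D : ℝ) + 2) n * poch (-(D : ℝ)) n * (n.factorial : ℝ))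

/-- The matrix `P` with entries `P_{i,j} = (2j+1)·₄F₃[−i,i+1,−j,j+1;1,D+2,−D;1]`. -/
noncomputable def Pmat (D : ℕ) : Matrix (Fin (D + 1)) (Fin (D + 1)) ℝ :=
  fun i j => (2 * ((j : ℕ) : ℝ) + 1) * F4 D (i : ℕ) (j : ℕ)

/-- `a_i = 3i(i+1)/(D(D+2))`. -/
noncomputable def aa (D i : ℕ) : ℝ := 3 * (i : ℝ) * ((i : ℝ) + 1) / ((D : ℝ) * ((D : ℝ) + 2))

/-- `b_i = 3(D−i)(i+1)(D+i+2)/(D(D+2)(2i+1))`. -/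
noncomputable def bb (D i : ℕ) : ℝ :=
  3 * ((D : ℝ) - i) * ((i : ℝ) + 1) * ((D : ℝ) + i + 2) /
    ((D : ℝ) * ((D : ℝ) + 2) * (2 * (i : ℝ) + 1))

/-- `c_i = 3(D−i+1)i(D+i+1)/(D(D+2)(2i+1))`. -/
noncomputable def cc (D i : ℕ) : ℝ :=
  3 * ((D : ℝ) - i + 1) * (i : ℝ) * ((D : ℝ) + i + 1) /
    ((D : ℝ) * ((D : ℝ) + 2) * (2 * (i : ℝ) + 1))

/-- `θ_i = 3 − 2a_i = 3 − 6i(i+1)/(D(D+2))`. -/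
noncomputable def theta (D i : ℕ) : ℝ := 3 - 2 * aa D i

/-- The irreducible tridiagonal matrix `A`. -/
noncomputable def Amat (D : ℕ) : Matrix (Fin (D + 1)) (Fin (D + 1)) ℝ :=
  fun i j =>
    if (i : ℕ) = (j : ℕ) then aa D (i : ℕ)
    else if (j : ℕ) = (i : ℕ) + 1 then bb D (i : ℕ)
    else if (i : ℕ) = (j : ℕ) + 1 then cc D (i : ℕ)
    else 0

/-- The diagonal matrix `A* = diag(θ_0,…,θ_D)`. -/
noncomputable def Astar (D : ℕ) : Matrix (Fin (D + 1)) (Fin (D + 1)) ℝ :=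
  Matrix.diagonal fun i => theta D (i : ℕ)

/-! Write `uₙ = pochProd n`, `wₙ = hypWeight D n` and `cₙ = descCoeff D n`, so that
`P i j = (2j+1) ∑ₙ wₙ uₙ(i) uₙ(j)`. Since `uₙ` is a polynomial in `x(x+1)` and `θ_i` is affine
in `i(i+1)`, multiplication by `θ_i` gives `θ_i uₙ(i) = θₙ uₙ(i) + 6/(D(D+2)) uₙ₊₁(i)`. Dually, a
contiguous relation of `uₙ` in `x` shows that the row `((2k+1) uₙ(k))ₖ` times `A` is
`(2j+1) (θₙ uₙ(j) + cₙ uₙ₋₁(j))`. Both sides of `PA = A*P` are therefore sums over `n`, and they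
agree after the index shift `n ↦ n + 1` because `wₙ = wₙ₊₁ (n+1)² (D+n+2) (n-D)` turns `wₙ₊₁ cₙ₊₁`
into `6 wₙ / (D(D+2))`. -/

open Finset

lemma poch_zero (a : ℝ) : poch a 0 = 1 := prod_range_zero _

lemma poch_succ (a : ℝ) (n : ℕ) : poch a (n + 1) = poch a n * (a + n) := prod_range_succ _ _

-- `(-x)ₙ (x+1)ₙ = ∏_{k<n} (k(k+1) - x(x+1))`
noncomputable def pochProd (n : ℕ) (x : ℝ) : ℝ := poch (-x) n * poch (x + 1) n

lemma pochProd_zero (x : ℝ) : pochProd 0 x = 1 := by simp [pochProd, poch_zero]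

lemma pochProd_succ (n : ℕ) (x : ℝ) :
    pochProd (n + 1) x = pochProd n x * ((n - x) * (x + n + 1)) := by
  simp only [pochProd, poch_succ]; ring

lemma pochProd_natCast_of_lt {j n : ℕ} (h : j < n) : pochProd n j = 0 := by
  have : poch (-(j : ℝ)) n = 0 := prod_eq_zero (mem_range.mpr h) (neg_add_cancel _)
  simp [pochProd, this]

lemma pochProd_succ_sub_one (n : ℕ) (x : ℝ) :
    pochProd (n + 1) (x - 1) = (n + 1 - x) * (x - n) * pochProd n x := by
  induction n with
  | zero => simp [pochProd_succ, pochProd_zero]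
  | succ n ih => rw [pochProd_succ, ih, pochProd_succ n x]; push_cast; ring

lemma pochProd_succ_add_one (n : ℕ) (x : ℝ) :
    pochProd (n + 1) (x + 1) = -((x + n + 2) * (x + n + 1)) * pochProd n x := by
  induction n with
  | zero => simp only [pochProd_succ, pochProd_zero]; push_cast; ring
  | succ n ih => rw [pochProd_succ, ih, pochProd_succ n x]; push_cast; ring

lemma pochProd_three_term (D x : ℝ) (n : ℕ) :
    3 * (D + 1 - x) * x * (D + x + 1) * pochProd n (x - 1)
      + 3 * x * (x + 1) * (2 * x + 1) * pochProd n x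
      + 3 * (D - x) * (x + 1) * (D + x + 2) * pochProd n (x + 1)
    = (2 * x + 1) * ((3 * D * (D + 2) - 6 * n * (n + 1)) * pochProd n x
      + 6 * n ^ 2 * (D + n + 1) * (n - 1 - D) * pochProd (n - 1) x) := by
  cases n with
  | zero => simp only [pochProd_zero, Nat.zero_sub, Nat.cast_zero]; ring
  | succ n =>
    rw [pochProd_succ_sub_one, pochProd_succ_add_one, pochProd_succ n x, Nat.add_sub_cancel]
    push_cast; ring

lemma theta_mul_pochProd (D i n : ℕ) :
    theta D i * pochProd n i
      = theta D n * pochProd n i + 6 / (D * (D + 2)) * pochProd (n + 1) i := by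
  rw [theta, theta, aa, aa, pochProd_succ]; ring

noncomputable def hypWeight (D n : ℕ) : ℝ :=
  (poch 1 n * poch ((D : ℝ) + 2) n * poch (-(D : ℝ)) n * (n.factorial : ℝ))⁻¹

lemma hypWeight_succ_mul {D n : ℕ} (hn : n < D) :
    hypWeight D (n + 1) * ((n + 1) ^ 2 * (D + n + 2) * (n - D)) = hypWeight D n := by
  have hK : ((n : ℝ) + 1) ^ 2 * (D + n + 2) * (n - D) ≠ 0 := by
    have : (n : ℝ) < D := by exact_mod_cast hn
    apply mul_ne_zero (by positivity) (by linarith)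
  have hsucc : poch 1 (n + 1) * poch ((D : ℝ) + 2) (n + 1) * poch (-(D : ℝ)) (n + 1)
        * ((n + 1).factorial : ℝ)
      = poch 1 n * poch ((D : ℝ) + 2) n * poch (-(D : ℝ)) n * (n.factorial : ℝ)
        * ((n + 1) ^ 2 * (D + n + 2) * (n - D)) := by
    simp only [poch_succ, Nat.factorial_succ]; push_cast; ring
  rw [hypWeight, hypWeight, hsucc, mul_inv, inv_mul_cancel_right₀ hK]

lemma F4_eq_sum {D i j : ℕ} (h : min i j ≤ D) :
    F4 D i j = ∑ n ∈ range (D + 1), hypWeight D n * pochProd n i * pochProd n j := by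
  rw [F4]
  calc _ = ∑ n ∈ range (min i j + 1), hypWeight D n * pochProd n i * pochProd n j :=
        sum_congr rfl fun n _ => by rw [hypWeight, pochProd, pochProd]; ring
    _ = _ := sum_subset (range_subset_range.mpr (by omega)) fun n _ hn => ?_
  rw [mem_range, not_lt] at hn
  rcases le_total i j with hij | hij
  · rw [pochProd_natCast_of_lt (show i < n by omega), mul_zero, zero_mul]
  · rw [pochProd_natCast_of_lt (show j < n by omega), mul_zero]

lemma sum_mul_tridiagonal {R : Type*} [Semiring R] (v a b c : ℕ → R) {D j : ℕ}
    (hj : j ≤ D) :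
    ∑ k : Fin (D + 1), v k * (if (k : ℕ) = j then a k else if j = (k : ℕ) + 1 then b k
      else if (k : ℕ) = j + 1 then c k else 0)
    = (if j = 0 then 0 else v (j - 1) * b (j - 1)) + v j * a j
      + (if j < D then v (j + 1) * c (j + 1) else 0) := by
  have hsplit : ∀ k, v k * (if k = j then a k else if j = k + 1 then b k
      else if k = j + 1 then c k else 0)
      = (if k = j then v k * a k else 0) + (if k = j - 1 ∧ j ≠ 0 then v k * b k else 0)
        + (if k = j + 1 then v k * c k else 0) := by
    intro k; split_ifs <;> first | omega | simp
  rw [Fin.sum_univ_eq_sum_range (fun k => v k * (if k = j then a k else if j = k + 1 then b k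
      else if k = j + 1 then c k else 0)), sum_congr rfl fun k _ => hsplit k]
  simp only [sum_add_distrib, sum_ite_eq', mem_range, ite_and]
  rw [if_pos (by omega), if_pos (by omega), add_comm (v j * a j)]
  simp only [Nat.add_lt_add_iff_right, ite_not]

-- vanishes at `n = 0`, where `n - 1` truncates
noncomputable def descCoeff (D n : ℕ) : ℝ :=
  6 * n ^ 2 * (D + n + 1) * (n - 1 - D) / (D * (D + 2))

lemma sum_mul_Amat_pochProd {D : ℕ} (hD : 0 < D) (n : ℕ) (j : Fin (D + 1)) :
    ∑ k : Fin (D + 1), (2 * ((k : ℕ) : ℝ) + 1) * pochProd n k * Amat D k j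
      = (2 * ((j : ℕ) : ℝ) + 1)
        * (theta D n * pochProd n j + descCoeff D n * pochProd (n - 1) j) := by
  obtain ⟨j, hj⟩ := j
  set v : ℕ → ℝ := fun k => (2 * k + 1) * pochProd n k
  have hd : (D : ℝ) * (D + 2) ≠ 0 := by positivity
  have hb : (if j = 0 then 0 else v (j - 1) * bb D (j - 1))
      = 3 * (D + 1 - j) * j * (D + j + 1) * pochProd n (j - 1) / (D * (D + 2)) := by
    rcases j with _ | j
    · simp
    · rw [if_neg j.succ_ne_zero]
      simp only [v, bb, Nat.add_sub_cancel, Nat.cast_add, Nat.cast_one, add_sub_cancel_right]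
      field_simp; ring
  have hc : (if j < D then v (j + 1) * cc D (j + 1) else 0)
      = 3 * (D - j) * (j + 1) * (D + j + 2) * pochProd n (j + 1) / (D * (D + 2)) := by
    split_ifs with hjD
    · simp only [v, cc]; push_cast; field_simp; ring
    · simp [show j = D by omega]
  refine (sum_mul_tridiagonal v (aa D) (bb D) (cc D) (Nat.lt_succ_iff.mp hj)).trans ?_
  rw [hb, hc, theta, aa, aa, descCoeff]
  field_simp
  linear_combination pochProd_three_term D j n

lemma Pmat_apply_eq_sum {D : ℕ} (i j : Fin (D + 1)) :
    Pmat D i j = ∑ n ∈ range (D + 1),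
      hypWeight D n * pochProd n i * ((2 * ((j : ℕ) : ℝ) + 1) * pochProd n j) := by
  rw [Pmat, F4_eq_sum (min_le_of_left_le i.is_le), mul_sum]
  exact sum_congr rfl fun n _ => by ring

lemma Pmat_mul_Amat_apply {D : ℕ} (hD : 0 < D) (i j : Fin (D + 1)) :
    (Pmat D * Amat D) i j = ∑ n ∈ range (D + 1), hypWeight D n * pochProd n i
      * ((2 * ((j : ℕ) : ℝ) + 1)
        * (theta D n * pochProd n j + descCoeff D n * pochProd (n - 1) j)) := by
  simp only [Matrix.mul_apply, Pmat_apply_eq_sum, sum_mul]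
  rw [sum_comm]
  refine sum_congr rfl fun n _ => ?_
  rw [← sum_mul_Amat_pochProd hD, mul_sum]
  exact sum_congr rfl fun k _ => by ring

lemma Astar_mul_Pmat_apply (D : ℕ) (i j : Fin (D + 1)) :
    (Astar D * Pmat D) i j = ∑ n ∈ range (D + 1),
      (theta D n * pochProd n i + 6 / (D * (D + 2)) * pochProd (n + 1) i) * hypWeight D n
        * ((2 * ((j : ℕ) : ℝ) + 1) * pochProd n j) := by
  rw [Astar, Matrix.diagonal_mul, Pmat_apply_eq_sum, mul_sum]
  refine sum_congr rfl fun n _ => ?_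
  rw [← theta_mul_pochProd]; ring

lemma sum_hypWeight_descCoeff {D i : ℕ} (hi : i ≤ D) (f : ℕ → ℝ) :
    ∑ n ∈ range (D + 1), hypWeight D n * pochProd n i * (descCoeff D n * f (n - 1))
      = ∑ n ∈ range (D + 1), 6 / (D * (D + 2)) * pochProd (n + 1) i * hypWeight D n * f n := by
  have hzero : descCoeff D 0 = 0 := by simp [descCoeff]
  rw [sum_range_succ', sum_range_succ, pochProd_natCast_of_lt (Nat.lt_succ_of_le hi), hzero]
  simp only [zero_mul, mul_zero, add_zero]
  refine sum_congr rfl fun n hn => ?_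
  rw [← hypWeight_succ_mul (mem_range.mp hn), Nat.add_sub_cancel, descCoeff]
  push_cast; ring

theorem PA_eq_AstarP (D : ℕ) (hD : 0 < D) : Pmat D * Amat D = Astar D * Pmat D := by
  ext i j
  set r : ℕ → ℝ := fun n => (2 * ((j : ℕ) : ℝ) + 1) * pochProd n j
  calc (Pmat D * Amat D) i j
      = ∑ n ∈ range (D + 1), theta D n * pochProd n i * hypWeight D n * r n
        + ∑ n ∈ range (D + 1), hypWeight D n * pochProd n i * (descCoeff D n * r (n - 1)) := by
        rw [Pmat_mul_Amat_apply hD, ← sum_add_distrib]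
        exact sum_congr rfl fun n _ => by ring
    _ = (Astar D * Pmat D) i j := by
        rw [sum_hypWeight_descCoeff i.is_le, ← sum_add_distrib, Astar_mul_Pmat_apply]
        exact sum_congr rfl fun n _ => by ring
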